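/- For all n ≥ 1 and 0 ≤ k ≤ n, the number G(n,k) of right-to-left partial Łukasiewicz paths of length n ending at height k whose last step is a down-step satisfies (n+1) · G(n,k) = (k+3) · C(2n−k−2, n) (with the convention that C(a,b) = 0 when a < b). -/

import Mathlib

/-- A right-to-left partial Łukasiewicz path of length `n` ending at height `k`:
a list of `n` integer steps, each `≤ 1`, with all partial sums `≥ 0`
and total sum `k`. -/
def IsRLPartialLuk (w : List ℤ) (n k : ℕ) : Prop :=
  w.length = n ∧ (∀ x ∈ w, x ≤ 1) ∧ (∀ i, 0 ≤ (w.take i).sum) ∧ w.sum = k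

/-- The last step of the path is a down-step, i.e. `w_n ≤ -1`. -/
def LastStepDown (w : List ℤ) : Prop := ∃ x, w.getLast? = some x ∧ x ≤ -1

/-!
Removing its last step turns a path of length `n + 1` ending at height `k` into a path of
length `n` ending at some height `j ≥ k - 1`, the removed step being `k - j`. So the numbers
`P(n, k)` of such paths satisfy `P(n+1, k) = ∑_{j ≥ k-1} P(n, j)`, which the ballot numbers
`(k+1)/(n+1) * C(2n-k, n)` also satisfy, by telescoping the ballot recurrence. The last step
is a down-step exactly when `j ≥ k + 1`, so the count in question is
`∑_{j ≥ k+1} P(n-1, j) = P(n, k+2)`.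
-/

namespace IsRLPartialLuk

theorem le_length {w : List ℤ} {n k : ℕ} (h : IsRLPartialLuk w n k) : k ≤ n := by
  obtain ⟨hlen, hstep, -, hsum⟩ := h
  have := w.sum_le_card_nsmul 1 hstep
  rw [hlen, hsum, nsmul_one] at this
  exact_mod_cast this

end IsRLPartialLuk

theorem isRLPartialLuk_zero_iff {w : List ℤ} {k : ℕ} :
    IsRLPartialLuk w 0 k ↔ w = [] ∧ k = 0 := by
  constructor
  · rintro ⟨hlen, -, -, hsum⟩
    obtain rfl := List.length_eq_zero_iff.mp hlen
    exact ⟨rfl, by simpa using hsum.symm⟩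
  · rintro ⟨rfl, rfl⟩
    exact ⟨rfl, by simp, by simp, rfl⟩

theorem List.forall_take_sum_nonneg_append_singleton {u : List ℤ} {x : ℤ} :
    (∀ i, 0 ≤ ((u ++ [x]).take i).sum) ↔ (∀ i, 0 ≤ (u.take i).sum) ∧ 0 ≤ u.sum + x := by
  constructor
  · intro h
    refine ⟨fun i => ?_, by simpa using h (u.length + 1)⟩
    rcases le_total i u.length with hi | hi
    · simpa [List.take_append_of_le_length hi] using h i
    · simpa [List.take_of_length_le hi] using h u.length
  · rintro ⟨hu, hx⟩ i
    rcases le_total i u.length with hi | hi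
    · rw [List.take_append_of_le_length hi]
      exact hu i
    · rw [List.take_append, List.take_of_length_le hi]
      rcases Nat.eq_zero_or_pos (i - u.length) with h0 | h0
      · simpa [h0] using hu u.length
      · simpa [List.take_of_length_le (show [x].length ≤ i - u.length by simpa)] using hx

theorem isRLPartialLuk_append_singleton_iff {u : List ℤ} {x : ℤ} {n k : ℕ} :
    IsRLPartialLuk (u ++ [x]) (n + 1) k ↔
      ∃ j : ℕ, IsRLPartialLuk u n j ∧ k ≤ j + 1 ∧ x = k - j := by
  simp only [IsRLPartialLuk, List.forall_take_sum_nonneg_append_singleton, List.length_append,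
    List.length_singleton, add_left_inj, List.mem_append, List.mem_singleton, List.sum_append,
    List.sum_singleton]
  constructor
  · rintro ⟨hlen, hstep, ⟨hu, -⟩, hsum⟩
    obtain ⟨j, hj⟩ : ∃ j : ℕ, (j : ℤ) = u.sum :=
      ⟨_, Int.toNat_of_nonneg (by simpa using hu u.length)⟩
    have hx := hstep x (.inr rfl)
    exact ⟨j, ⟨hlen, fun y hy => hstep y (.inl hy), hu, hj.symm⟩, by omega, by omega⟩
  · rintro ⟨j, ⟨hlen, hstep, hu, hsum⟩, hkj, rfl⟩
    refine ⟨hlen, ?_, ⟨hu, by omega⟩, by omega⟩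
    rintro y (hy | rfl)
    · exact hstep y hy
    · omega

theorem Finset.card_biUnion_image_append_singleton {ι α : Type*} [DecidableEq α] {s : Finset ι}
    {F : ι → Finset (List α)} {g : ι → α} (hg : Set.InjOn g s) :
    (s.biUnion fun j => (F j).image (· ++ [g j])).card = ∑ j ∈ s, (F j).card := by
  rw [Finset.card_biUnion]
  · exact Finset.sum_congr rfl fun j _ =>
      Finset.card_image_of_injective _ (List.append_left_injective _)
  · intro a ha b hb hab
    rw [Function.onFun, Finset.disjoint_left]
    simp only [Finset.mem_image]
    rintro _ ⟨u, -, rfl⟩ ⟨v, -, hvu⟩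
    rw [List.append_singleton_inj] at hvu
    exact hab (hg ha hb hvu.2.symm)

def rlPartialLukPaths : ℕ → ℕ → Finset (List ℤ)
  | 0, k => if k = 0 then {[]} else ∅
  | n + 1, k => (Finset.Ico (k - 1) (n + 1)).biUnion fun j =>
      (rlPartialLukPaths n j).image (· ++ [(k : ℤ) - j])

theorem mem_rlPartialLukPaths {n k : ℕ} {w : List ℤ} :
    w ∈ rlPartialLukPaths n k ↔ IsRLPartialLuk w n k := by
  induction n generalizing k w with
  | zero => by_cases hk : k = 0 <;> simp [rlPartialLukPaths, isRLPartialLuk_zero_iff, hk]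
  | succ n ih =>
    rcases w.eq_nil_or_concat' with rfl | ⟨u, x, rfl⟩
    · simp [rlPartialLukPaths, IsRLPartialLuk]
    · simp only [rlPartialLukPaths, Finset.mem_biUnion, Finset.mem_Ico, Finset.mem_image, ih,
        isRLPartialLuk_append_singleton_iff]
      constructor
      · rintro ⟨j, ⟨hkj, -⟩, v, hv, hvu⟩
        obtain ⟨rfl, rfl⟩ := List.append_singleton_inj.mp hvu
        exact ⟨j, hv, by omega, rfl⟩
      · rintro ⟨j, hu, hkj, rfl⟩
        exact ⟨j, ⟨by omega, Nat.lt_succ_of_le hu.le_length⟩, u, hu, rfl⟩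

theorem card_rlPartialLukPaths_succ (n k : ℕ) :
    (rlPartialLukPaths (n + 1) k).card =
      ∑ j ∈ Finset.Ico (k - 1) (n + 1), (rlPartialLukPaths n j).card :=
  Finset.card_biUnion_image_append_singleton fun a _ b _ h => by simpa using h

/-- The ballot recurrence `P(n+1, a+1) = P(n, a) + P(n+1, a+2)` for
`P(n, k) = (k+1)/(n+1) * C(2n-k, n)`, multiplied by `(n+1)(n+2)`. -/
theorem choose_ballot_recurrence {n a : ℕ} (h : a ≤ n) :
    (n + 2) * ((a + 1) * (2 * n - a).choose n) + (n + 1) * ((a + 3) * (2 * n - a).choose (n + 1)) =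
      (n + 1) * ((a + 2) * (2 * n + 1 - a).choose (n + 1)) := by
  obtain ⟨d, rfl⟩ := Nat.exists_eq_add_of_le h
  rw [show 2 * (a + d) - a = a + 2 * d by omega, show 2 * (a + d) + 1 - a = a + 2 * d + 1 by omega,
    Nat.choose_succ_succ']
  have hr := Nat.choose_succ_right_eq (a + 2 * d) (a + d)
  rw [show a + 2 * d - (a + d) = d by omega] at hr
  zify at hr ⊢
  linear_combination hr

theorem sum_Ico_ballot {n a : ℕ} (h : a ≤ n + 1) :
    ∑ j ∈ Finset.Ico a (n + 1), (n + 2) * ((j + 1) * (2 * n - j).choose n) =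
      (n + 1) * ((a + 2) * (2 * n + 1 - a).choose (n + 1)) := by
  induction h using Nat.decreasingInduction with
  | self => simp [Nat.choose_eq_zero_of_lt (show 2 * n - n < n + 1 by omega)]
  | of_succ a ha ih =>
    rw [Finset.sum_eq_sum_Ico_succ_bot ha, ih, show 2 * n + 1 - (a + 1) = 2 * n - a by omega]
    exact choose_ballot_recurrence (by omega)

theorem succ_mul_card_rlPartialLukPaths {n k : ℕ} (hk : k ≤ n) :
    (n + 1) * (rlPartialLukPaths n k).card = (k + 1) * (2 * n - k).choose n := by
  induction n generalizing k with
  | zero =>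
    obtain rfl : k = 0 := by omega
    simp [rlPartialLukPaths]
  | succ n ih =>
    have hsum : (n + 1) * ((n + 2) * (rlPartialLukPaths (n + 1) k).card) =
        (n + 1) * ((k - 1 + 2) * (2 * n + 1 - (k - 1)).choose (n + 1)) := by
      rw [card_rlPartialLukPaths_succ, ← sum_Ico_ballot (by omega), Finset.mul_sum, Finset.mul_sum]
      refine Finset.sum_congr rfl fun j hj => ?_
      rw [← ih (by simp at hj; omega)]
      ring
    rw [Nat.eq_of_mul_eq_mul_left n.succ_pos hsum]
    rcases k with _ | k
    · rw [show 2 * n + 1 - (0 - 1) = 2 * n + 1 by omega,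
        show 2 * (n + 1) - 0 = 2 * n + 1 + 1 by omega, Nat.choose_succ_succ' (2 * n + 1) n,
        ← Nat.choose_symm_half]
      ring
    · rw [show 2 * n + 1 - (k + 1 - 1) = 2 * (n + 1) - (k + 1) by omega, Nat.add_sub_cancel]

theorem rlPartialLukPaths_eq_empty_of_lt {n k : ℕ} (h : n < k) : rlPartialLukPaths n k = ∅ :=
  Finset.eq_empty_of_forall_notMem fun _ hw => h.not_ge (mem_rlPartialLukPaths.mp hw).le_length

theorem lastStepDown_append_singleton {u : List ℤ} {x : ℤ} : LastStepDown (u ++ [x]) ↔ x ≤ -1 := by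
  simp [LastStepDown]

theorem card_lastStepDown_eq_card_rlPartialLukPaths (n k : ℕ) :
    Nat.card {w : List ℤ // IsRLPartialLuk w n k ∧ LastStepDown w} =
      (rlPartialLukPaths n (k + 2)).card := by
  cases n with
  | zero =>
    have : IsEmpty {w : List ℤ // IsRLPartialLuk w 0 k ∧ LastStepDown w} :=
      ⟨fun ⟨_, hw, _, hx, _⟩ => by simp [(isRLPartialLuk_zero_iff.mp hw).1] at hx⟩
    simp [rlPartialLukPaths]
  | succ m =>
    set D := (Finset.Ico (k + 1) (m + 1)).biUnion fun j =>
      (rlPartialLukPaths m j).image (· ++ [(k : ℤ) - j])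
    have hD (w : List ℤ) : IsRLPartialLuk w (m + 1) k ∧ LastStepDown w ↔ w ∈ D := by
      rcases w.eq_nil_or_concat' with rfl | ⟨u, x, rfl⟩
      · simp [LastStepDown, D]
      · simp only [D, Finset.mem_biUnion, Finset.mem_Ico, Finset.mem_image, mem_rlPartialLukPaths,
          List.append_singleton_inj, isRLPartialLuk_append_singleton_iff,
          lastStepDown_append_singleton]
        constructor
        · rintro ⟨⟨j, hu, -, rfl⟩, hx⟩
          exact ⟨j, ⟨by omega, Nat.lt_succ_of_le hu.le_length⟩, u, hu, rfl, rfl⟩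
        · rintro ⟨j, ⟨hj, -⟩, _, hu, rfl, rfl⟩
          exact ⟨⟨j, hu, by omega, rfl⟩, by omega⟩
    rw [Nat.card_congr (Equiv.subtypeEquivRight hD), Nat.card_eq_finsetCard,
      card_rlPartialLukPaths_succ,
      Finset.card_biUnion_image_append_singleton fun a _ b _ h => by simpa using h]
    rfl

theorem rlPartialLuk_lastDown_count_general (n k : ℕ) (hn : 1 ≤ n) :
    (n + 1) * Nat.card {w : List ℤ // IsRLPartialLuk w n k ∧ LastStepDown w} =
      (k + 3) * Nat.choose (2 * n - k - 2) n := by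
  rw [card_lastStepDown_eq_card_rlPartialLukPaths]
  rcases le_or_gt (k + 2) n with hk | hk
  · rw [succ_mul_card_rlPartialLukPaths hk, Nat.sub_sub]
  · rw [rlPartialLukPaths_eq_empty_of_lt hk, Nat.choose_eq_zero_of_lt (by omega)]
    simp

theorem rlPartialLuk_lastDown_count (n k : ℕ) (hn : 1 ≤ n) (hk : k ≤ n) :
    (n + 1) * Nat.card {w : List ℤ // IsRLPartialLuk w n k ∧ LastStepDown w} =
      (k + 3) * Nat.choose (2 * n - k - 2) n :=
  rlPartialLuk_lastDown_count_general n k hn
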